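/- Let n ≥ 2, let c be a coloring of n strands, set t = t_{c_n}, and let c⁺ be the coloring of n+1 strands with c⁺_i = c_i for i ≤ n and c⁺_{n+1} = c_n. Suppose A is an (n−1)×(n−1) matrix over Λ_μ and v is a row vector of length n−1 over Λ_μ such that (A, v) satisfies the boundary relation for c, and let M = [[A,0],[v,1]]. Let G^{+1} be the n×n matrix equal to the identity except in its last 2×2 diagonal block, which equals [[1, t],[0, −t]], and let G^{−1} be its inverse (identity except last 2×2 block [[1, 1],[0, −t^{−1}]]). Then for every m ∈ Λ_μ and every ε ∈ {+1, −1}: F(c⁺, t^{−ε}·m, M·G^{ε}) = F(c, m, A) in Q. (This is the invariance of the paper's invariant f under the second colored Markov move, Proposition 3.2(2), in matrix form: here M·G^{ε} is the reduced colored Gassner matrix of σ_n^{ε} i_{c_n}(α) when A is the reduced colored Gassner matrix of a (c,c)-braid α with monomial ⟨α⟩ = m.) -/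

import Mathlib

noncomputable section

open scoped BigOperators

/-- The multivariable Laurent polynomial ring `Λ_μ = ℤ[t₁^{±1},…,t_μ^{±1}]`,
realized as the group ℤ-algebra of `ℤ^μ`. -/
abbrev Lau (μ : ℕ) : Type := AddMonoidAlgebra ℤ (Fin μ →₀ ℤ)

instance (μ : ℕ) : IsDomain (Lau μ) := NoZeroDivisors.to_isDomain _

/-- The distinguished unit `t_i` of `Λ_μ`. -/
def tU {μ : ℕ} (i : Fin μ) : (Lau μ)ˣ where
  val := AddMonoidAlgebra.single (Finsupp.single i 1) 1
  inv := AddMonoidAlgebra.single (Finsupp.single i (-1)) 1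
  val_inv := by
    rw [AddMonoidAlgebra.single_mul_single, ← Finsupp.single_add]
    norm_num; rfl
  inv_val := by
    rw [AddMonoidAlgebra.single_mul_single, ← Finsupp.single_add]
    norm_num; rfl

/-- `T^c_i = t_{c_1} ⋯ t_{c_i}` (product of the first `i` values of the coloring,
zero-indexed: product over indices `k ≤ i`), as a unit of `Λ_μ`. -/
def TU {μ n : ℕ} (c : Fin n → Fin μ) (i : Fin n) : (Lau μ)ˣ :=
  ∏ k ∈ Finset.Iic i, tU (c k)

/-- The `n×n` matrix `[[A,0],[v,1]]` built from an `(n−1)×(n−1)` matrix `A`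
and a row vector `v` of length `n−1` (here `n = l+2`): the upper-left block is `A`,
the last column is `(0,…,0,1)ᵀ` and the last row begins with `v`. -/
def aug {μ l : ℕ} (A : Matrix (Fin (l+1)) (Fin (l+1)) (Lau μ)) (v : Fin (l+1) → Lau μ) :
    Matrix (Fin (l+2)) (Fin (l+2)) (Lau μ) := fun i j =>
  if hi : (i : ℕ) < l + 1 then
    if hj : (j : ℕ) < l + 1 then A ⟨i, hi⟩ ⟨j, hj⟩ else 0
  else
    if hj : (j : ℕ) < l + 1 then v ⟨j, hj⟩ else 1

/-- The pair `(A, v)` satisfies the boundary relation for the coloring `c`: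
for every column `j`, `∑_{i=1}^{n−1} (T^c_i − 1)(A − I)_{ij} = −(T^c_n − 1) v_j`. -/
def BoundaryRel {μ l : ℕ} (c : Fin (l+2) → Fin μ) (A : Matrix (Fin (l+1)) (Fin (l+1)) (Lau μ))
    (v : Fin (l+1) → Lau μ) : Prop :=
  ∀ j : Fin (l+1), ∑ i : Fin (l+1),
      ((TU c i.castSucc : Lau μ) - 1) * (A - 1) i j
    = -((TU c (Fin.last (l+1)) : Lau μ) - 1) * v j

/-- The `(l+2)×(l+2)` matrix equal to the identity except in its last `2×2`
diagonal block, which is `[[a,b],[c,d]]`. -/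
def last2Block {μ : ℕ} (l : ℕ) (a b c d : Lau μ) :
    Matrix (Fin (l+2)) (Fin (l+2)) (Lau μ) := fun i j =>
  if (i : ℕ) = l ∧ (j : ℕ) = l then a
  else if (i : ℕ) = l ∧ (j : ℕ) = l + 1 then b
  else if (i : ℕ) = l + 1 ∧ (j : ℕ) = l then c
  else if (i : ℕ) = l + 1 ∧ (j : ℕ) = l + 1 then d
  else if i = j then 1 else 0

/-- The ring endomorphism `g` of `Λ_μ` sending each `t_i` to `t_i²` (the ℤ-linear
extension of the exponent-doubling endomorphism of `ℤ^μ`). -/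
def gmap (μ : ℕ) : Lau μ →+* Lau μ :=
  AddMonoidAlgebra.mapDomainRingHom ℤ ((2 : ℕ) • AddMonoidHom.id (Fin μ →₀ ℤ))

/-- The quantity `F(c, m, A) = (−1)^{n+1} · m · g(det(A − I)) / (T^c_n − (T^c_n)^{−1})`
in the field of fractions `Q` of `Λ_μ`, for a coloring `c` of `n = k+1` strands,
a monomial `m` and a `k×k` matrix `A`. -/
def Fdef {μ k : ℕ} (c : Fin (k+1) → Fin μ) (m : Lau μ)
    (A : Matrix (Fin k) (Fin k) (Lau μ)) : FractionRing (Lau μ) :=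
  (-1) ^ (k + 2) * algebraMap (Lau μ) (FractionRing (Lau μ)) (m * gmap μ ((A - 1).det)) /
    (algebraMap (Lau μ) (FractionRing (Lau μ)) (TU c (Fin.last k) : Lau μ)
      - algebraMap (Lau μ) (FractionRing (Lau μ)) (((TU c (Fin.last k))⁻¹ : (Lau μ)ˣ) : Lau μ))

/-!
The boundary relation says precisely that the row vector `w = (T^c_k - 1)_k` is fixed by
`M = [[A,0],[v,1]]`. For `G` equal to the identity except for a last block `[[1,b],[0,d]]`,
the vector `w (M G - I) = w G - w` therefore vanishes except in its last entry, which is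
`b (T^c_{n-1} - 1) + (d - 1) (T^c_n - 1)`. Replacing the last row of `M G - I` by this
combination of rows multiplies the determinant by `T^c_n - 1` and leaves a block triangular
matrix, whence
`(T^c_n - 1) det (M G - I) = (b (T^c_{n-1} - 1) + (d - 1) (T^c_n - 1)) det (A - I)`.
Since `g` squares monomials, applying `g` for `(b, d) = (t, -t)` and for `(1, -t⁻¹)`, and
multiplying by `t^{-ε} m`, gives in both cases the relation
`((T^c_n)² - 1) X = (t⁻¹ - t (T^c_n)²) Y` between the numerators `X`, `Y` of the two sides
of the claimed equality; as `T^{c⁺}_{n+1} = T^c_n t`, this is exactly what it takes.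
-/

open Matrix

theorem Matrix.mul_det_eq_vecMul_mul_det_submatrix_succAbove {R : Type*} [CommRing R] {n : ℕ}
    (M : Matrix (Fin (n + 1)) (Fin (n + 1)) R) (w : Fin (n + 1) → R) (i₀ j₀ : Fin (n + 1))
    (hw : ∀ j ≠ j₀, (w ᵥ* M) j = 0) :
    w i₀ * M.det =
      (-1) ^ (i₀ + j₀ : ℕ) * (w ᵥ* M) j₀ * (M.submatrix i₀.succAbove j₀.succAbove).det := by
  have hrow : ∑ k, w k • M k = w ᵥ* M := by
    ext j
    simp [vecMul, dotProduct, Finset.sum_apply]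
  rw [← smul_eq_mul, ← det_updateRow_sum, det_succ_row _ i₀, Fintype.sum_eq_single j₀]
  · simp [hrow, submatrix_updateRow_succAbove]
  · intro j hj
    simp [hrow, hw j hj]

section Stabilization

variable {μ l : ℕ}

section aug

variable (A : Matrix (Fin (l+1)) (Fin (l+1)) (Lau μ)) (v : Fin (l+1) → Lau μ)

@[simp]
lemma aug_castSucc_castSucc (i j : Fin (l+1)) : aug A v i.castSucc j.castSucc = A i j := by
  simp [aug, Fin.is_le]

@[simp]
lemma aug_castSucc_last (i : Fin (l+1)) : aug A v i.castSucc (Fin.last (l+1)) = 0 := by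
  simp [aug, Fin.is_le]

@[simp]
lemma aug_last_castSucc (j : Fin (l+1)) : aug A v (Fin.last (l+1)) j.castSucc = v j := by
  simp [aug, Fin.is_le]

@[simp]
lemma aug_last_last : aug A v (Fin.last (l+1)) (Fin.last (l+1)) = 1 := by
  simp [aug]

end aug

lemma BoundaryRel.vecMul_aug {c : Fin (l+2) → Fin μ}
    {A : Matrix (Fin (l+1)) (Fin (l+1)) (Lau μ)} {v : Fin (l+1) → Lau μ} (hb : BoundaryRel c A v) :
    (fun k => (TU c k : Lau μ) - 1) ᵥ* aug A v = fun k => (TU c k : Lau μ) - 1 := by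
  funext k
  induction k using Fin.lastCases with
  | last => simp [vecMul, dotProduct, Fin.sum_univ_castSucc]
  | cast j =>
    have h := hb j
    simp only [Matrix.sub_apply, one_apply, mul_sub, mul_ite, mul_one, mul_zero,
      Finset.sum_sub_distrib, Finset.sum_ite_eq', Finset.mem_univ, if_true] at h
    rw [vecMul, dotProduct, Fin.sum_univ_castSucc]
    simp only [aug_castSucc_castSucc, aug_last_castSucc]
    linear_combination h

variable (b d : Lau μ)

lemma last2Block_apply_castSucc (i : Fin (l+2)) (j : Fin (l+1)) :
    last2Block l 1 b 0 d i j.castSucc =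
      (1 : Matrix (Fin (l+2)) (Fin (l+2)) (Lau μ)) i j.castSucc := by
  simp only [last2Block, one_apply, Fin.ext_iff, Fin.val_castSucc]
  split_ifs <;> first | omega | rfl

lemma last2Block_apply_last (i : Fin (l+2)) :
    last2Block l 1 b 0 d i (Fin.last (l+1)) =
      b * (1 : Matrix (Fin (l+2)) (Fin (l+2)) (Lau μ)) i (Fin.last l).castSucc
        + d * (1 : Matrix (Fin (l+2)) (Fin (l+2)) (Lau μ)) i (Fin.last (l+1)) := by
  simp only [last2Block, one_apply, Fin.ext_iff, Fin.val_castSucc, Fin.val_last, and_true]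
  split_ifs <;> first | omega | simp

lemma vecMul_last2Block_castSucc (w : Fin (l+2) → Lau μ) (j : Fin (l+1)) :
    (w ᵥ* last2Block l 1 b 0 d) j.castSucc = w j.castSucc := by
  simp [vecMul, dotProduct, last2Block_apply_castSucc, one_apply]

lemma vecMul_last2Block_last (w : Fin (l+2) → Lau μ) :
    (w ᵥ* last2Block l 1 b 0 d) (Fin.last (l+1)) =
      b * w (Fin.last l).castSucc + d * w (Fin.last (l+1)) := by
  simp [vecMul, dotProduct, last2Block_apply_last, one_apply, mul_add,
    Finset.sum_add_distrib]
  ring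

lemma mul_last2Block_apply_castSucc (N : Matrix (Fin (l+2)) (Fin (l+2)) (Lau μ))
    (i : Fin (l+2)) (j : Fin (l+1)) :
    (N * last2Block l 1 b 0 d) i j.castSucc = N i j.castSucc := by
  simp [mul_apply, last2Block_apply_castSucc, one_apply]

lemma TU_sub_one_mul_det_aug_mul_last2Block_sub_one {c : Fin (l+2) → Fin μ}
    {A : Matrix (Fin (l+1)) (Fin (l+1)) (Lau μ)} {v : Fin (l+1) → Lau μ}
    (hb : BoundaryRel c A v) :
    ((TU c (Fin.last (l+1)) : Lau μ) - 1) * (aug A v * last2Block l 1 b 0 d - 1).det =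
      (b * ((TU c (Fin.last l).castSucc : Lau μ) - 1)
        + (d - 1) * ((TU c (Fin.last (l+1)) : Lau μ) - 1)) * (A - 1).det := by
  set w : Fin (l+2) → Lau μ := fun k => (TU c k : Lau μ) - 1
  have hvec : w ᵥ* (aug A v * last2Block l 1 b 0 d - 1) = w ᵥ* last2Block l 1 b 0 d - w := by
    rw [vecMul_sub, ← vecMul_vecMul, hb.vecMul_aug, vecMul_one]
  have hsub : (aug A v * last2Block l 1 b 0 d - 1).submatrix Fin.castSucc Fin.castSucc
      = A - 1 := by
    ext i j
    simp [mul_last2Block_apply_castSucc, one_apply]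
  have hdet := mul_det_eq_vecMul_mul_det_submatrix_succAbove
    (aug A v * last2Block l 1 b 0 d - 1) w (Fin.last (l+1)) (Fin.last (l+1)) fun j hj => by
      obtain ⟨j, rfl⟩ := Fin.exists_castSucc_eq.mpr hj
      simp [hvec, vecMul_last2Block_castSucc]
  simp only [Fin.succAbove_last, hsub, hvec, Pi.sub_apply, vecMul_last2Block_last] at hdet
  rw [hdet, Even.neg_one_pow ⟨_, rfl⟩]
  ring

end Stabilization

section Monomials

variable {μ : ℕ}

open AddMonoidAlgebra

lemma TU_val_eq_of {n : ℕ} (c : Fin n → Fin μ) (i : Fin n) :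
    (TU c i : Lau μ) =
      of ℤ _ (Multiplicative.ofAdd (∑ k ∈ Finset.Iic i, Finsupp.single (c k) 1)) := by
  rw [TU, Units.coe_prod, ofAdd_sum, map_prod]
  rfl

lemma TU_pow_two_ne_one {n : ℕ} (c : Fin n → Fin μ) (i : Fin n) : TU c i ^ 2 ≠ 1 := by
  intro h
  have h' := congrArg (fun u : (Lau μ)ˣ => (u : Lau μ)) h
  simp only [Units.val_pow_eq_pow_val, TU_val_eq_of, ← map_pow, Units.val_one,
    ← map_one (of ℤ (Fin μ →₀ ℤ))] at h'
  have := congrArg (fun x => Finsupp.degree (Multiplicative.toAdd x)) (of_injective h')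
  simp [Finsupp.degree_single] at this
  omega

lemma gmap_of (a : Multiplicative (Fin μ →₀ ℤ)) : gmap μ (of ℤ _ a) = of ℤ _ a ^ 2 := by
  simp [gmap, two_smul]

lemma gmap_TU {n : ℕ} (c : Fin n → Fin μ) (i : Fin n) :
    gmap μ (TU c i) = (TU c i : Lau μ) ^ 2 := by
  rw [TU_val_eq_of, gmap_of]

lemma gmap_tU (i : Fin μ) : gmap μ (tU i) = (tU i : Lau μ) ^ 2 :=
  gmap_of _

lemma gmap_tU_inv (i : Fin μ) : gmap μ ↑(tU i)⁻¹ = (↑(tU i)⁻¹ : Lau μ) ^ 2 :=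
  gmap_of _

lemma TU_last {n : ℕ} (c : Fin (n+1) → Fin μ) : TU c (Fin.last n) = ∏ k, tU (c k) := by
  rw [TU, ← Fin.top_eq_last, Finset.Iic_top]

lemma TU_snoc_last {n : ℕ} (c : Fin (n+1) → Fin μ) (x : Fin μ) :
    TU (Fin.snoc c x) (Fin.last (n+1)) = TU c (Fin.last n) * tU x := by
  simp [TU_last, Fin.prod_univ_castSucc]

lemma TU_castSucc {n : ℕ} (c : Fin (n+1) → Fin μ) (i : Fin n) :
    TU c i.castSucc = TU (Fin.init c) i := by
  rw [TU, TU, ← Fin.map_castSuccEmb_Iic, Finset.prod_map]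
  rfl

lemma TU_last_eq_mul {n : ℕ} (c : Fin (n+2) → Fin μ) :
    TU c (Fin.last (n+1)) = TU c (Fin.last n).castSucc * tU (c (Fin.last (n+1))) := by
  conv_lhs => rw [← Fin.snoc_init_self c]
  rw [TU_snoc_last, TU_castSucc]

end Monomials

lemma div_mul_sub_inv_eq_neg_div_sub_inv {K : Type*} [Field K] {y τ X Y : K} (hy₀ : y ≠ 0)
    (hτ : τ ≠ 0) (hy : y ^ 2 ≠ 1) (hyτ : (y * τ) ^ 2 ≠ 1)
    (h : (y ^ 2 - 1) * X = (τ⁻¹ - τ * y ^ 2) * Y) :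
    X / (y * τ - (y * τ)⁻¹) = -(Y / (y - y⁻¹)) := by
  have hy' : y ^ 2 - 1 ≠ 0 := sub_ne_zero.mpr hy
  have hyτ' : (y * τ) ^ 2 - 1 ≠ 0 := sub_ne_zero.mpr hyτ
  have hX : X = -((y * τ) ^ 2 - 1) * Y / (τ * (y ^ 2 - 1)) := by
    rw [eq_div_iff (mul_ne_zero hτ hy')]
    field_simp at h
    linear_combination h
  have e₁ : y * τ - (y * τ)⁻¹ = ((y * τ) ^ 2 - 1) / (y * τ) := by field_simp
  have e₂ : y - y⁻¹ = (y ^ 2 - 1) / y := by field_simp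
  rw [e₁, e₂, hX]
  generalize (y * τ) ^ 2 - 1 = P at hyτ' ⊢
  field_simp

lemma Fdef_snoc_eq {μ l : ℕ} {c : Fin (l+2) → Fin μ} {x : Fin μ}
    {A : Matrix (Fin (l+1)) (Fin (l+1)) (Lau μ)} {B : Matrix (Fin (l+2)) (Fin (l+2)) (Lau μ)}
    {m m' : Lau μ}
    (h : ((TU c (Fin.last (l+1)) : Lau μ) ^ 2 - 1) * (m' * gmap μ (B - 1).det) =
      ((↑(tU x)⁻¹ : Lau μ) - tU x * (TU c (Fin.last (l+1)) : Lau μ) ^ 2)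
        * (m * gmap μ (A - 1).det)) :
    Fdef (Fin.snoc c x) m' B = Fdef c m A := by
  simp only [Fdef, TU_snoc_last, Units.val_mul, map_mul, map_units_inv]
  set φ := algebraMap (Lau μ) (FractionRing (Lau μ))
  have hφ : Function.Injective φ := IsFractionRing.injective _ _
  have hunit : ∀ u : (Lau μ)ˣ, φ u ≠ 0 := fun u => (u.map φ.toMonoidHom).ne_zero
  have hsq : ∀ {n : ℕ} (c : Fin (n+1) → Fin μ), φ (TU c (Fin.last n)) ^ 2 ≠ 1 := by
    intro n c hc
    rw [← map_pow, ← map_one φ] at hc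
    exact TU_pow_two_ne_one c _ (Units.ext (by simpa using hφ hc))
  have hφ_h := congrArg φ h
  simp only [map_mul, map_sub, map_pow, map_one, map_units_inv] at hφ_h
  have key := div_mul_sub_inv_eq_neg_div_sub_inv (hunit _) (hunit _) (hsq c)
    (by simpa [TU_snoc_last] using hsq (Fin.snoc c x)) hφ_h
  linear_combination (-(-1) ^ (l + 1 + 2)) * key

section Markov

variable {μ l : ℕ} {c : Fin (l+2) → Fin μ} {A : Matrix (Fin (l+1)) (Fin (l+1)) (Lau μ)}
  {v : Fin (l+1) → Lau μ}

local notation "tₙ" => tU (c (Fin.last (l+1)))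
local notation "Tₙ" => TU c (Fin.last (l+1))
local notation "Tₙ₋₁" => TU c (Fin.castSucc (Fin.last l))

lemma gmap_det_markov_pos (hb : BoundaryRel c A v) (m : Lau μ) :
    ((Tₙ : Lau μ) ^ 2 - 1) *
        ((↑tₙ⁻¹ * m) * gmap μ (aug A v * last2Block l 1 (tₙ : Lau μ) 0 (-tₙ) - 1).det) =
      ((↑tₙ⁻¹ : Lau μ) - tₙ * (Tₙ : Lau μ) ^ 2) * (m * gmap μ (A - 1).det) := by
  have key := congrArg (gmap μ)
    (TU_sub_one_mul_det_aug_mul_last2Block_sub_one (tₙ : Lau μ) (-tₙ) hb)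
  simp only [map_mul, map_sub, map_add, map_neg, map_one, gmap_TU, gmap_tU] at key
  have hT : (Tₙ : Lau μ) = Tₙ₋₁ * tₙ := by rw [TU_last_eq_mul, Units.val_mul]
  have ht : (↑tₙ⁻¹ : Lau μ) * tₙ = 1 := Units.inv_mul _
  rw [hT] at key ⊢
  linear_combination (↑tₙ⁻¹ * m) * key
    - m * gmap μ (A - 1).det * (tₙ : Lau μ) ^ 3 * (Tₙ₋₁ : Lau μ) ^ 2 * ht

lemma gmap_det_markov_neg (hb : BoundaryRel c A v) (m : Lau μ) :
    ((Tₙ : Lau μ) ^ 2 - 1) *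
        ((tₙ : Lau μ) * m * gmap μ (aug A v * last2Block l 1 1 0 (-(↑tₙ⁻¹ : Lau μ)) - 1).det) =
      ((↑tₙ⁻¹ : Lau μ) - tₙ * (Tₙ : Lau μ) ^ 2) * (m * gmap μ (A - 1).det) := by
  have key := congrArg (gmap μ)
    (TU_sub_one_mul_det_aug_mul_last2Block_sub_one 1 (-(↑tₙ⁻¹ : Lau μ)) hb)
  simp only [map_mul, map_sub, map_add, map_neg, map_one, gmap_TU, gmap_tU_inv] at key
  have hT : (Tₙ : Lau μ) = Tₙ₋₁ * tₙ := by rw [TU_last_eq_mul, Units.val_mul]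
  have ht : (↑tₙ⁻¹ : Lau μ) * tₙ = 1 := Units.inv_mul _
  rw [hT] at key ⊢
  linear_combination (tₙ * m : Lau μ) * key
    - m * gmap μ (A - 1).det
      * ((tₙ : Lau μ) * (Tₙ₋₁ : Lau μ) ^ 2 * ((↑tₙ⁻¹ : Lau μ) * tₙ + 1) - ↑tₙ⁻¹) * ht

end Markov

/-- invariance of the invariant `f` under the second colored Markov
move, in matrix form. With `t = t_{c_n}`, `c⁺ = (c_1,…,c_n,c_n)`, `M = [[A,0],[v,1]]`,
`G^{+1}` the identity except for the last `2×2` block `[[1,t],[0,−t]]` and `G^{−1}`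
its inverse (identity except for the last `2×2` block `[[1,1],[0,−t⁻¹]]`), if `(A,v)`
satisfies the boundary relation for `c` then for every `m ∈ Λ_μ` and each
`ε ∈ {+1,−1}`: `F(c⁺, t^{−ε} m, M·G^{ε}) = F(c, m, A)` (here `n = l + 2 ≥ 2`). -/
theorem stmt6 {μ l : ℕ} (c : Fin (l+2) → Fin μ)
    (A : Matrix (Fin (l+1)) (Fin (l+1)) (Lau μ)) (v : Fin (l+1) → Lau μ)
    (hb : BoundaryRel c A v) (m : Lau μ) :
    (Fdef (Fin.snoc c (c (Fin.last (l+1))))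
        ((((tU (c (Fin.last (l+1))))⁻¹ : (Lau μ)ˣ) : Lau μ) * m)
        (aug A v *
          last2Block l 1 (tU (c (Fin.last (l+1))) : Lau μ) 0
            (-(tU (c (Fin.last (l+1))) : Lau μ)))
      = Fdef c m A)
    ∧ (Fdef (Fin.snoc c (c (Fin.last (l+1))))
        ((tU (c (Fin.last (l+1))) : Lau μ) * m)
        (aug A v *
          last2Block l 1 1 0 (-(((tU (c (Fin.last (l+1))))⁻¹ : (Lau μ)ˣ) : Lau μ)))
      = Fdef c m A) :=
  ⟨Fdef_snoc_eq (gmap_det_markov_pos hb m), Fdef_snoc_eq (gmap_det_markov_neg hb m)⟩
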